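/- arXiv:2008.00391 — 3 statements merged into one kernel-verified Lean document; each statement's English description precedes it below -/
import Mathlib

section
/- Let f(y) = -y A(y) + B(y) - γ with A, B as above, F continuous, 1-F(z) > 0 near 0, finite second moment, and 0 < γ < μ₁ where μ₁ = ∫_0^∞ (1-F(z)) dz. Then f is continuous on (0,∞), strictly decreasing, f(0+) = μ₁ - γ > 0, f(y) → -γ as y → ∞, and hence f has a unique positive root λ. -/
open MeasureTheory Set Filter Topology intervalIntegral

/-! Since `f y = ∫₀^{1/y} (1 - y t) (1 - F t) dt - γ`, its derivative is `-A(1/y) < 0`. As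
`y → 0+`, `f y → μ₁ - γ` because `A(1/y)` stays bounded (finite second moment); as `y → ∞` both
terms vanish, `y A(1/y)` being a difference quotient of `A` at `0`, where `A' 0 = 0`. The
intermediate value theorem gives the root, strict monotonicity its uniqueness. -/

/-- `∫₀^{1/y} (1 - y t) g t dt`, written as `-y A + B` as in the paper. -/
noncomputable def rampIntegral (g : ℝ → ℝ) (y : ℝ) : ℝ :=
  -y * (∫ t in (0 : ℝ)..y⁻¹, t * g t) + ∫ t in (0 : ℝ)..y⁻¹, g t

section

variable {g : ℝ → ℝ}

theorem hasDerivAt_rampIntegral (hg : Continuous g) {y : ℝ} (hy : y ≠ 0) :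
    HasDerivAt (rampIntegral g) (-∫ t in (0 : ℝ)..y⁻¹, t * g t) y := by
  have hA : HasDerivAt (fun y => ∫ t in (0 : ℝ)..y⁻¹, t * g t) (y⁻¹ * g y⁻¹ * -(y ^ 2)⁻¹) y :=
    ((continuous_id.mul hg).integral_hasStrictDerivAt 0 y⁻¹).hasDerivAt.comp y (hasDerivAt_inv hy)
  have hB : HasDerivAt (fun y => ∫ t in (0 : ℝ)..y⁻¹, g t) (g y⁻¹ * -(y ^ 2)⁻¹) y :=
    (hg.integral_hasStrictDerivAt 0 y⁻¹).hasDerivAt.comp y (hasDerivAt_inv hy)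
  refine (((hasDerivAt_neg' y).mul hA).add hB).congr_deriv ?_
  field_simp
  ring

theorem continuousOn_rampIntegral (hg : Continuous g) : ContinuousOn (rampIntegral g) (Ioi 0) :=
  fun _ hy => (hasDerivAt_rampIntegral hg (ne_of_gt hy)).continuousAt.continuousWithinAt

theorem integral_id_mul_pos (hg : Continuous g) (hg₀ : ∀ t, 0 ≤ g t)
    (hpos : ∃ δ > 0, ∀ t ∈ Ioo 0 δ, 0 < g t) {c : ℝ} (hc : 0 < c) :
    0 < ∫ t in (0 : ℝ)..c, t * g t := by
  obtain ⟨δ, hδ, hgδ⟩ := hpos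
  have hint : ∀ a b : ℝ, IntervalIntegrable (fun t => t * g t) volume a b :=
    (continuous_id.mul hg).intervalIntegrable
  have hδc : 0 < min δ c := lt_min hδ hc
  have hhead : 0 < ∫ t in (0 : ℝ)..min δ c, t * g t :=
    intervalIntegral_pos_of_pos_on (hint _ _)
      (fun t ht => mul_pos ht.1 (hgδ t ⟨ht.1, ht.2.trans_le (min_le_left _ _)⟩)) hδc
  have htail : 0 ≤ ∫ t in min δ c..c, t * g t :=
    integral_nonneg (min_le_right _ _) fun t ht => mul_nonneg (hδc.le.trans ht.1) (hg₀ t)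
  rw [← integral_add_adjacent_intervals (hint 0 (min δ c)) (hint _ c)]
  linarith

theorem strictAntiOn_rampIntegral (hg : Continuous g) (hg₀ : ∀ t, 0 ≤ g t)
    (hpos : ∃ δ > 0, ∀ t ∈ Ioo 0 δ, 0 < g t) : StrictAntiOn (rampIntegral g) (Ioi 0) := by
  refine strictAntiOn_of_hasDerivWithinAt_neg (f' := fun y => -∫ t in (0 : ℝ)..y⁻¹, t * g t)
    (convex_Ioi 0) (continuousOn_rampIntegral hg) (fun y hy => ?_) fun y hy => ?_
  · rw [interior_Ioi] at hy
    exact (hasDerivAt_rampIntegral hg (ne_of_gt hy)).hasDerivWithinAt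
  · rw [interior_Ioi] at hy
    exact neg_neg_of_pos (integral_id_mul_pos hg hg₀ hpos (inv_pos.2 hy))

theorem tendsto_rampIntegral_nhdsGT_zero (hg₁ : IntegrableOn g (Ioi 0))
    (hg₂ : IntegrableOn (fun t => t * g t) (Ioi 0)) :
    Tendsto (rampIntegral g) (𝓝[>] 0) (𝓝 (∫ t in Ioi 0, g t)) := by
  have hA := intervalIntegral_tendsto_integral_Ioi 0 hg₂ tendsto_inv_nhdsGT_zero
  have hB := intervalIntegral_tendsto_integral_Ioi 0 hg₁ tendsto_inv_nhdsGT_zero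
  have hy : Tendsto (fun y : ℝ => -y) (𝓝[>] 0) (𝓝 0) :=
    (continuous_neg.tendsto' 0 0 neg_zero).mono_left nhdsWithin_le_nhds
  unfold rampIntegral
  simpa using (hy.mul hA).add hB

theorem tendsto_rampIntegral_atTop (hg : Continuous g) :
    Tendsto (rampIntegral g) atTop (𝓝 0) := by
  have hA : Tendsto (fun y : ℝ => y * ∫ t in (0 : ℝ)..y⁻¹, t * g t) atTop (𝓝 0) := by
    have hderiv := ((continuous_id.mul hg).integral_hasStrictDerivAt 0 0).hasDerivAt
    simpa [Function.comp_def] using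
      hderiv.tendsto_slope_zero_right.comp tendsto_inv_atTop_nhdsGT_zero
  have hB : Tendsto (fun y : ℝ => ∫ t in (0 : ℝ)..y⁻¹, g t) atTop (𝓝 0) := by
    simpa [Function.comp_def] using
      ((continuous_primitive hg.intervalIntegrable 0).tendsto 0).comp tendsto_inv_atTop_zero
  unfold rampIntegral
  simpa using hA.neg.add hB

end

theorem existsUnique_pos_eq_zero_of_strictAntiOn {f : ℝ → ℝ} (hc : ContinuousOn f (Ioi 0))
    (ha : StrictAntiOn f (Ioi 0)) (h₀ : ∀ᶠ y in 𝓝[>] 0, 0 < f y)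
    (htop : ∀ᶠ y in atTop, f y < 0) : ∃! x, 0 < x ∧ f x = 0 := by
  obtain ⟨a, hfa, ha₀ : 0 < a⟩ := (h₀.and self_mem_nhdsWithin).exists
  obtain ⟨b, hfb, hab⟩ := (htop.and (eventually_gt_atTop a)).exists
  have hsub : Icc a b ⊆ Ioi 0 := fun z hz => ha₀.trans_le hz.1
  obtain ⟨x, hx, hfx⟩ := intermediate_value_Icc' hab.le (hc.mono hsub) ⟨hfb.le, hfa.le⟩
  exact ⟨x, ⟨hsub hx, hfx⟩, fun z ⟨hz, hfz⟩ => ha.injOn hz (hsub hx) (hfz.trans hfx.symm)⟩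

theorem f_has_unique_positive_root_general
    (F : ℝ → ℝ) (γ μ₁ : ℝ)
    (hFcont : Continuous F)
    (hle : ∀ z, F z ≤ 1)
    (hint1 : IntegrableOn (fun z => 1 - F z) (Ioi (0 : ℝ)))
    (hint2 : IntegrableOn (fun z => z * (1 - F z)) (Ioi (0 : ℝ)))
    (hpos : ∃ δ > (0 : ℝ), ∀ z ∈ Ioo (0 : ℝ) δ, F z < 1)
    (hμ₁ : μ₁ = ∫ z in Ioi (0 : ℝ), (1 - F z))
    (hγ : 0 < γ) (hγμ : γ < μ₁) :
    ContinuousOn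
      (fun y : ℝ => -y * (∫ t in (0 : ℝ)..y⁻¹, t * (1 - F t))
        + (∫ t in (0 : ℝ)..y⁻¹, (1 - F t)) - γ) (Ioi 0) ∧
    StrictAntiOn
      (fun y : ℝ => -y * (∫ t in (0 : ℝ)..y⁻¹, t * (1 - F t))
        + (∫ t in (0 : ℝ)..y⁻¹, (1 - F t)) - γ) (Ioi 0) ∧
    Tendsto
      (fun y : ℝ => -y * (∫ t in (0 : ℝ)..y⁻¹, t * (1 - F t))
        + (∫ t in (0 : ℝ)..y⁻¹, (1 - F t)) - γ) (𝓝[>] 0) (𝓝 (μ₁ - γ)) ∧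
    0 < μ₁ - γ ∧
    Tendsto
      (fun y : ℝ => -y * (∫ t in (0 : ℝ)..y⁻¹, t * (1 - F t))
        + (∫ t in (0 : ℝ)..y⁻¹, (1 - F t)) - γ) atTop (𝓝 (-γ)) ∧
    ∃! lam : ℝ, 0 < lam ∧
      -lam * (∫ t in (0 : ℝ)..lam⁻¹, t * (1 - F t))
        + (∫ t in (0 : ℝ)..lam⁻¹, (1 - F t)) - γ = 0 := by
  have hg : Continuous fun z => 1 - F z := continuous_const.sub hFcont
  have hg₀ : ∀ z, 0 ≤ 1 - F z := fun z => sub_nonneg.2 (hle z)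
  have hgpos : ∃ δ > 0, ∀ z ∈ Ioo 0 δ, 0 < 1 - F z := by
    obtain ⟨δ, hδ, hF⟩ := hpos
    exact ⟨δ, hδ, fun z hz => sub_pos.2 (hF z hz)⟩
  set f := fun y => rampIntegral (fun z => 1 - F z) y - γ
  have hcont : ContinuousOn f (Ioi 0) := (continuousOn_rampIntegral hg).sub continuousOn_const
  have hanti : StrictAntiOn f (Ioi 0) := fun x hx y hy hxy =>
    sub_lt_sub_right (strictAntiOn_rampIntegral hg hg₀ hgpos hx hy hxy) γ
  have hlim₀ : Tendsto f (𝓝[>] 0) (𝓝 (μ₁ - γ)) :=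
    hμ₁ ▸ (tendsto_rampIntegral_nhdsGT_zero hint1 hint2).sub_const γ
  have hlimTop : Tendsto f atTop (𝓝 (-γ)) := by
    simpa using (tendsto_rampIntegral_atTop hg).sub_const γ
  have hμγ : 0 < μ₁ - γ := sub_pos.2 hγμ
  exact ⟨hcont, hanti, hlim₀, hμγ, hlimTop, existsUnique_pos_eq_zero_of_strictAntiOn hcont hanti
    ((tendsto_order.1 hlim₀).1 0 hμγ) ((tendsto_order.1 hlimTop).2 0 (neg_neg_of_pos hγ))⟩

/-- Properties of `f(y) = -y A(y) + B(y) - γ`: continuous on `(0,∞)`, strictly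
decreasing, `f(0+) = μ₁ - γ > 0`, `f(y) → -γ` as `y → ∞`, and `f` has a unique
positive root. -/
theorem f_has_unique_positive_root
    (F : ℝ → ℝ) (γ μ₁ : ℝ)
    (hmono : Monotone F)
    (hFcont : Continuous F)
    (hle : ∀ z, F z ≤ 1)
    (hneg : ∀ z < (0 : ℝ), F z = 0)
    (htop : Tendsto F atTop (𝓝 1))
    (hint1 : IntegrableOn (fun z => 1 - F z) (Ioi (0 : ℝ)))
    (hint2 : IntegrableOn (fun z => z * (1 - F z)) (Ioi (0 : ℝ)))
    (hpos : ∃ δ > (0 : ℝ), ∀ z ∈ Ioo (0 : ℝ) δ, F z < 1)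
    (hμ₁ : μ₁ = ∫ z in Ioi (0 : ℝ), (1 - F z))
    (hγ : 0 < γ) (hγμ : γ < μ₁) :
    ContinuousOn
      (fun y : ℝ => -y * (∫ t in (0 : ℝ)..y⁻¹, t * (1 - F t))
        + (∫ t in (0 : ℝ)..y⁻¹, (1 - F t)) - γ) (Ioi 0) ∧
    StrictAntiOn
      (fun y : ℝ => -y * (∫ t in (0 : ℝ)..y⁻¹, t * (1 - F t))
        + (∫ t in (0 : ℝ)..y⁻¹, (1 - F t)) - γ) (Ioi 0) ∧
    Tendsto
      (fun y : ℝ => -y * (∫ t in (0 : ℝ)..y⁻¹, t * (1 - F t))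
        + (∫ t in (0 : ℝ)..y⁻¹, (1 - F t)) - γ) (𝓝[>] 0) (𝓝 (μ₁ - γ)) ∧
    0 < μ₁ - γ ∧
    Tendsto
      (fun y : ℝ => -y * (∫ t in (0 : ℝ)..y⁻¹, t * (1 - F t))
        + (∫ t in (0 : ℝ)..y⁻¹, (1 - F t)) - γ) atTop (𝓝 (-γ)) ∧
    ∃! lam : ℝ, 0 < lam ∧
      -lam * (∫ t in (0 : ℝ)..lam⁻¹, t * (1 - F t))
        + (∫ t in (0 : ℝ)..lam⁻¹, (1 - F t)) - γ = 0 :=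
  f_has_unique_positive_root_general F γ μ₁ hFcont hle hint1 hint2 hpos hμ₁ hγ hγμ
end

section
/- Define F̃(y,z) = A(-y/z) where A(w) = ∫_0^{1/w} t(1-F(t)) dt for w > 0 and A(w) = ∫_0^∞ t(1-F(t)) dt for w ≤ 0, with F the CDF of a nonnegative random variable satisfying t^3(1-F(t)) ≤ C for all t ≥ 0. Then F̃ is Lipschitz continuous on (-∞,∞) × [1,∞) with a Lipschitz constant depending only on C. -/
open MeasureTheory Set Filter Topology

/-- The function `A` from the paper: `A(w) = ∫_0^{1/w} t (1 - F t) dt` for `w > 0`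
and `A(w) = ∫_0^∞ t (1 - F t) dt` for `w ≤ 0`. -/
noncomputable def Afun (F : ℝ → ℝ) : ℝ → ℝ := fun w =>
  if 0 < w then ∫ t in Ioo (0 : ℝ) w⁻¹, t * (1 - F t)
  else ∫ t in Ioi (0 : ℝ), t * (1 - F t)

/-!
With `g t = t * (1 - F t)`, the tail bound gives `0 ≤ g t ≤ min (max C 1) (C / t ^ 2)` for
`t > 0`. Hence `A` is antitone and `C`-Lipschitz, as `∫_{1/w₂}^{1/w₁} g ≤ C (w₂ - w₁)`.
Since `|∂_y (-y / z)| = 1 / z ≤ 1`, this settles the `y`-direction. In the `z`-direction with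
`s = -y > 0`, the same bound works when `s ≤ 1` because `|∂_z (s / z)| = s / z ^ 2 ≤ 1`;
when `s ≥ 1` one integrates `g ≤ max C 1` over `[z₂ / s, z₁ / s]`, of length `≤ z₁ - z₂`.
-/

theorem LipschitzOnWith.uncurry {α β γ : Type*} [PseudoEMetricSpace α] [PseudoEMetricSpace β]
    [PseudoEMetricSpace γ] {f : α → β → γ} {s : Set α} {t : Set β} {Kα Kβ : NNReal}
    (hα : ∀ b ∈ t, LipschitzOnWith Kα (fun a => f a b) s)
    (hβ : ∀ a ∈ s, LipschitzOnWith Kβ (f a) t) :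
    LipschitzOnWith (Kα + Kβ) (Function.uncurry f) (s ×ˢ t) := by
  rintro ⟨a₁, b₁⟩ ⟨ha₁, hb₁⟩ ⟨a₂, b₂⟩ ⟨ha₂, hb₂⟩
  simp only [Function.uncurry, ENNReal.coe_add, add_mul]
  apply le_trans (edist_triangle _ (f a₂ b₁) _)
  exact add_le_add ((hα b₁ hb₁ ha₁ ha₂).trans (mul_right_mono (le_max_left _ _)))
    ((hβ a₂ ha₂ hb₁ hb₂).trans (mul_right_mono (le_max_right _ _)))

theorem intervalIntegrable_of_integrableOn_Ioi {f : ℝ → ℝ} {a b c : ℝ}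
    (hf : IntegrableOn f (Ioi c)) (hca : c ≤ a) (hab : a ≤ b) : IntervalIntegrable f volume a b :=
  (intervalIntegrable_iff_integrableOn_Ioc_of_le hab).2
    (hf.mono_set (Ioc_subset_Ioi_self.trans (Ioi_subset_Ioi hca)))

theorem integral_Ioi_rpow_neg_two {a : ℝ} (ha : 0 < a) : ∫ t in Ioi a, t ^ (-2 : ℝ) = a⁻¹ := by
  rw [integral_Ioi_rpow_of_lt (by norm_num) ha]
  norm_num [Real.rpow_neg_one]

theorem intervalIntegral_rpow_neg_two {a b : ℝ} (ha : 0 < a) (hab : a ≤ b) :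
    ∫ t in a..b, t ^ (-2 : ℝ) = a⁻¹ - b⁻¹ := by
  rw [← intervalIntegral.integral_Ioi_sub_Ioi (integrableOn_Ioi_rpow_of_lt (by norm_num) ha) hab,
    integral_Ioi_rpow_neg_two ha, integral_Ioi_rpow_neg_two (ha.trans_le hab)]

section TailIntegrand

variable {F : ℝ → ℝ} {C t : ℝ}

theorem mul_one_sub_nonneg (hF1 : ∀ z, F z ≤ 1) (ht : 0 ≤ t) : 0 ≤ t * (1 - F t) :=
  mul_nonneg ht (sub_nonneg.2 (hF1 t))

theorem mul_one_sub_le_self (hF0 : ∀ z, 0 ≤ F z) (ht : 0 ≤ t) : t * (1 - F t) ≤ t :=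
  mul_le_of_le_one_right ht (sub_le_self _ (hF0 t))

theorem mul_one_sub_le_rpow_neg_two (htail : ∀ z ≥ (0 : ℝ), z ^ 3 * (1 - F z) ≤ C)
    (ht : 0 < t) : t * (1 - F t) ≤ C * t ^ (-2 : ℝ) := by
  rw [Real.rpow_neg ht.le, Real.rpow_two, ← div_eq_mul_inv, le_div_iff₀ (by positivity)]
  linear_combination htail t ht.le

theorem mul_one_sub_le_max (hF0 : ∀ z, 0 ≤ F z) (hF1 : ∀ z, F z ≤ 1)
    (htail : ∀ z ≥ (0 : ℝ), z ^ 3 * (1 - F z) ≤ C) (ht : 0 ≤ t) : t * (1 - F t) ≤ max C 1 := by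
  rcases le_total t 1 with ht1 | ht1
  · exact (mul_one_sub_le_self hF0 ht).trans (ht1.trans (le_max_right _ _))
  · calc t * (1 - F t) ≤ t ^ 3 * (1 - F t) :=
          mul_le_mul_of_nonneg_right (le_self_pow₀ ht1 (by norm_num)) (sub_nonneg.2 (hF1 t))
      _ ≤ C := htail t ht
      _ ≤ max C 1 := le_max_left _ _

theorem integrableOn_Ioi_mul_one_sub (hFm : Measurable F) (hF0 : ∀ z, 0 ≤ F z)
    (hF1 : ∀ z, F z ≤ 1) (htail : ∀ z ≥ (0 : ℝ), z ^ 3 * (1 - F z) ≤ C) :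
    IntegrableOn (fun t => t * (1 - F t)) (Ioi 0) := by
  have hmeas : AEStronglyMeasurable (fun t => t * (1 - F t)) :=
    (measurable_id.mul (measurable_const.sub hFm)).aestronglyMeasurable
  rw [← Ioc_union_Ioi_eq_Ioi zero_le_one]
  refine IntegrableOn.union ?_ ?_
  · refine Measure.integrableOn_of_bounded (M := max C 1) (by simp) hmeas ?_
    filter_upwards [ae_restrict_mem measurableSet_Ioc] with t ht
    rw [Real.norm_of_nonneg (mul_one_sub_nonneg hF1 ht.1.le)]
    exact mul_one_sub_le_max hF0 hF1 htail ht.1.le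
  · refine ((integrableOn_Ioi_rpow_of_lt (a := -2) (by norm_num) one_pos).const_mul C).mono'
      hmeas.restrict ?_
    filter_upwards [ae_restrict_mem measurableSet_Ioi] with t (ht : 1 < t)
    rw [Real.norm_of_nonneg (mul_one_sub_nonneg hF1 (by linarith))]
    exact mul_one_sub_le_rpow_neg_two htail (by linarith)

end TailIntegrand

section TailIntegral

variable {F : ℝ → ℝ} {C a b : ℝ}

theorem integral_Ioi_mul_one_sub_le (hint : IntegrableOn (fun t => t * (1 - F t)) (Ioi 0))
    (htail : ∀ z ≥ (0 : ℝ), z ^ 3 * (1 - F z) ≤ C) (ha : 0 < a) :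
    ∫ t in Ioi a, t * (1 - F t) ≤ C * a⁻¹ := by
  rw [← integral_Ioi_rpow_neg_two ha, ← integral_const_mul]
  exact setIntegral_mono_on (hint.mono_set (Ioi_subset_Ioi ha.le))
    ((integrableOn_Ioi_rpow_of_lt (by norm_num) ha).const_mul C) measurableSet_Ioi
    fun t ht => mul_one_sub_le_rpow_neg_two htail (ha.trans ht)

theorem intervalIntegral_mul_one_sub_le (hint : IntegrableOn (fun t => t * (1 - F t)) (Ioi 0))
    (htail : ∀ z ≥ (0 : ℝ), z ^ 3 * (1 - F z) ≤ C) (ha : 0 < a) (hab : a ≤ b) :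
    ∫ t in a..b, t * (1 - F t) ≤ C * (a⁻¹ - b⁻¹) := by
  rw [← intervalIntegral_rpow_neg_two ha hab, ← intervalIntegral.integral_const_mul]
  refine intervalIntegral.integral_mono_on hab
    (intervalIntegrable_of_integrableOn_Ioi hint ha.le hab) ?_
    fun t ht => mul_one_sub_le_rpow_neg_two htail (ha.trans_le ht.1)
  exact intervalIntegrable_of_integrableOn_Ioi
    ((integrableOn_Ioi_rpow_of_lt (by norm_num) ha).const_mul C) le_rfl hab

theorem intervalIntegral_mul_one_sub_le_max
    (hint : IntegrableOn (fun t => t * (1 - F t)) (Ioi 0))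
    (hF0 : ∀ z, 0 ≤ F z) (hF1 : ∀ z, F z ≤ 1) (htail : ∀ z ≥ (0 : ℝ), z ^ 3 * (1 - F z) ≤ C)
    (ha : 0 ≤ a) (hab : a ≤ b) :
    ∫ t in a..b, t * (1 - F t) ≤ max C 1 * (b - a) := by
  calc ∫ t in a..b, t * (1 - F t) ≤ ∫ _ in a..b, max C 1 :=
        intervalIntegral.integral_mono_on hab (intervalIntegrable_of_integrableOn_Ioi hint ha hab)
          intervalIntegrable_const fun t ht => mul_one_sub_le_max hF0 hF1 htail (ha.trans ht.1)
    _ = max C 1 * (b - a) := by rw [intervalIntegral.integral_const, smul_eq_mul, mul_comm]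

end TailIntegral

section Afun

variable {F : ℝ → ℝ} {C w w₁ w₂ : ℝ}

theorem Afun_of_pos (hw : 0 < w) : Afun F w = ∫ t in (0)..w⁻¹, t * (1 - F t) := by
  rw [Afun, if_pos hw, intervalIntegral.integral_of_le (inv_pos.2 hw).le,
    integral_Ioc_eq_integral_Ioo]

theorem Afun_of_nonpos (hw : w ≤ 0) : Afun F w = ∫ t in Ioi 0, t * (1 - F t) :=
  if_neg hw.not_gt

theorem Afun_sub_Afun_of_pos (hint : IntegrableOn (fun t => t * (1 - F t)) (Ioi 0))
    (h₁ : 0 < w₁) (h : w₁ ≤ w₂) :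
    Afun F w₁ - Afun F w₂ = ∫ t in w₂⁻¹..w₁⁻¹, t * (1 - F t) := by
  have h₂ : 0 < w₂ := h₁.trans_le h
  rw [Afun_of_pos h₁, Afun_of_pos h₂, intervalIntegral.integral_interval_sub_left
    (intervalIntegrable_of_integrableOn_Ioi hint le_rfl (inv_pos.2 h₁).le)
    (intervalIntegrable_of_integrableOn_Ioi hint le_rfl (inv_pos.2 h₂).le)]

theorem Afun_sub_Afun_of_nonpos_of_pos (hint : IntegrableOn (fun t => t * (1 - F t)) (Ioi 0))
    (h₁ : w₁ ≤ 0) (h₂ : 0 < w₂) :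
    Afun F w₁ - Afun F w₂ = ∫ t in Ioi w₂⁻¹, t * (1 - F t) := by
  rw [Afun_of_nonpos h₁, Afun_of_pos h₂, ← intervalIntegral.integral_interval_add_Ioi hint
    (hint.mono_set (Ioi_subset_Ioi (inv_pos.2 h₂).le)), add_sub_cancel_left]

theorem Afun_antitone (hint : IntegrableOn (fun t => t * (1 - F t)) (Ioi 0))
    (hF1 : ∀ z, F z ≤ 1) : Antitone (Afun F) := by
  intro w₁ w₂ h
  rcases le_or_gt w₂ 0 with h₂ | h₂
  · rw [Afun_of_nonpos h₂, Afun_of_nonpos (h.trans h₂)]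
  rw [← sub_nonneg]
  rcases le_or_gt w₁ 0 with h₁ | h₁
  · rw [Afun_sub_Afun_of_nonpos_of_pos hint h₁ h₂]
    exact setIntegral_nonneg measurableSet_Ioi
      fun t ht => mul_one_sub_nonneg hF1 ((inv_pos.2 h₂).trans ht).le
  · rw [Afun_sub_Afun_of_pos hint h₁ h]
    exact intervalIntegral.integral_nonneg (inv_anti₀ h₁ h)
      fun t ht => mul_one_sub_nonneg hF1 ((inv_pos.2 h₂).trans_le ht.1).le

theorem Afun_sub_Afun_le (hint : IntegrableOn (fun t => t * (1 - F t)) (Ioi 0))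
    (htail : ∀ z ≥ (0 : ℝ), z ^ 3 * (1 - F z) ≤ C) (h : w₁ ≤ w₂) :
    Afun F w₁ - Afun F w₂ ≤ C * (w₂ - w₁) := by
  have hC : 0 ≤ C := by simpa using htail 0 le_rfl
  rcases le_or_gt w₂ 0 with h₂ | h₂
  · rw [Afun_of_nonpos h₂, Afun_of_nonpos (h.trans h₂), sub_self]
    exact mul_nonneg hC (sub_nonneg.2 h)
  rcases le_or_gt w₁ 0 with h₁ | h₁
  · rw [Afun_sub_Afun_of_nonpos_of_pos hint h₁ h₂]
    calc ∫ t in Ioi w₂⁻¹, t * (1 - F t) ≤ C * w₂⁻¹⁻¹ :=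
          integral_Ioi_mul_one_sub_le hint htail (inv_pos.2 h₂)
      _ ≤ C * (w₂ - w₁) := by rw [inv_inv]; gcongr; linarith
  · rw [Afun_sub_Afun_of_pos hint h₁ h]
    simpa using intervalIntegral_mul_one_sub_le hint htail (inv_pos.2 h₂) (inv_anti₀ h₁ h)

theorem Afun_sub_Afun_le_max (hint : IntegrableOn (fun t => t * (1 - F t)) (Ioi 0))
    (hF0 : ∀ z, 0 ≤ F z) (hF1 : ∀ z, F z ≤ 1) (htail : ∀ z ≥ (0 : ℝ), z ^ 3 * (1 - F z) ≤ C)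
    (h₁ : 0 < w₁) (h : w₁ ≤ w₂) :
    Afun F w₁ - Afun F w₂ ≤ max C 1 * (w₁⁻¹ - w₂⁻¹) := by
  rw [Afun_sub_Afun_of_pos hint h₁ h]
  exact intervalIntegral_mul_one_sub_le_max hint hF0 hF1 htail (inv_pos.2 (h₁.trans_le h)).le
    (inv_anti₀ h₁ h)

theorem lipschitzWith_Afun (hint : IntegrableOn (fun t => t * (1 - F t)) (Ioi 0))
    (hF1 : ∀ z, F z ≤ 1) (htail : ∀ z ≥ (0 : ℝ), z ^ 3 * (1 - F z) ≤ C) :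
    LipschitzWith (Real.toNNReal C) (Afun F) := by
  have hC : 0 ≤ C := by simpa using htail 0 le_rfl
  refine LipschitzWith.of_le_add_mul' C fun w₁ w₂ => ?_
  rcases le_total w₁ w₂ with h | h
  · rw [Real.dist_eq, abs_of_nonpos (sub_nonpos.2 h)]
    linarith [Afun_sub_Afun_le hint htail h]
  · exact (Afun_antitone hint hF1 h).trans (le_add_of_nonneg_right (mul_nonneg hC dist_nonneg))

end Afun

section Ftilde

variable {F : ℝ → ℝ} {C : ℝ}

theorem lipschitzWith_Afun_neg_div_const (hint : IntegrableOn (fun t => t * (1 - F t)) (Ioi 0))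
    (hF1 : ∀ z, F z ≤ 1) (htail : ∀ z ≥ (0 : ℝ), z ^ 3 * (1 - F z) ≤ C) {z : ℝ} (hz : 1 ≤ z) :
    LipschitzWith (Real.toNNReal C) (fun y => Afun F (-y / z)) := by
  have hdiv : LipschitzWith 1 (fun y : ℝ => -y / z) := LipschitzWith.of_dist_le_mul fun y₁ y₂ => by
    rw [Real.dist_eq, Real.dist_eq, ← sub_div, abs_div, abs_of_pos (by linarith : 0 < z),
      NNReal.coe_one, one_mul, neg_sub_neg, abs_sub_comm]
    exact div_le_self (abs_nonneg _) hz
  exact mul_one (Real.toNNReal C) ▸ (lipschitzWith_Afun hint hF1 htail).comp hdiv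

theorem Afun_div_sub_Afun_div_le (hint : IntegrableOn (fun t => t * (1 - F t)) (Ioi 0))
    (hF0 : ∀ z, 0 ≤ F z) (hF1 : ∀ z, F z ≤ 1) (htail : ∀ z ≥ (0 : ℝ), z ^ 3 * (1 - F z) ≤ C)
    {s z₁ z₂ : ℝ} (hs : 0 < s) (hz₂ : 1 ≤ z₂) (h : z₂ ≤ z₁) :
    Afun F (s / z₁) - Afun F (s / z₂) ≤ max C 1 * (z₁ - z₂) := by
  have hz₁ : 1 ≤ z₁ := hz₂.trans h
  have hw : s / z₁ ≤ s / z₂ := div_le_div_of_nonneg_left hs.le (by linarith) h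
  rcases le_total s 1 with hs1 | hs1
  · have hdiff : s / z₂ - s / z₁ ≤ z₁ - z₂ := by
      rw [div_sub_div _ _ (by positivity) (by positivity), div_le_iff₀ (by positivity)]
      nlinarith [mul_le_mul_of_nonneg_right hs1 (sub_nonneg.2 h),
        mul_le_mul_of_nonneg_right (one_le_mul_of_one_le_of_one_le hz₂ hz₁) (sub_nonneg.2 h)]
    calc Afun F (s / z₁) - Afun F (s / z₂) ≤ C * (s / z₂ - s / z₁) :=
          Afun_sub_Afun_le hint htail hw
      _ ≤ max C 1 * (z₁ - z₂) := by
          gcongr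
          exact le_max_left _ _
  · calc Afun F (s / z₁) - Afun F (s / z₂) ≤ max C 1 * ((s / z₁)⁻¹ - (s / z₂)⁻¹) :=
          Afun_sub_Afun_le_max hint hF0 hF1 htail (by positivity) hw
      _ = max C 1 * ((z₁ - z₂) / s) := by rw [inv_div, inv_div, sub_div]
      _ ≤ max C 1 * (z₁ - z₂) := by gcongr; exact div_le_self (sub_nonneg.2 h) hs1

theorem lipschitzOnWith_Afun_neg_const_div (hint : IntegrableOn (fun t => t * (1 - F t)) (Ioi 0))
    (hF0 : ∀ z, 0 ≤ F z) (hF1 : ∀ z, F z ≤ 1) (htail : ∀ z ≥ (0 : ℝ), z ^ 3 * (1 - F z) ≤ C)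
    (y : ℝ) : LipschitzOnWith (Real.toNNReal (max C 1)) (fun z => Afun F (-y / z)) (Ici 1) := by
  refine LipschitzOnWith.of_le_add_mul' _ fun z₁ (hz₁ : 1 ≤ z₁) z₂ (hz₂ : 1 ≤ z₂) => ?_
  have hM : 0 ≤ max C 1 * dist z₁ z₂ :=
    mul_nonneg (zero_le_one.trans (le_max_right _ _)) dist_nonneg
  rcases le_or_gt 0 y with hy | hy
  · rw [Afun_of_nonpos (div_nonpos_of_nonpos_of_nonneg (neg_nonpos.2 hy) (by linarith)),
      Afun_of_nonpos (div_nonpos_of_nonpos_of_nonneg (neg_nonpos.2 hy) (by linarith))]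
    linarith
  rcases le_total z₁ z₂ with h | h
  · exact (Afun_antitone hint hF1 (div_le_div_of_nonneg_left (by linarith) (by linarith) h)).trans
      (le_add_of_nonneg_right hM)
  · rw [Real.dist_eq, abs_of_nonneg (sub_nonneg.2 h)]
    linarith [Afun_div_sub_Afun_div_le hint hF0 hF1 htail (neg_pos.2 hy) hz₂ h]

end Ftilde

theorem Ftilde_lipschitz_general
    (C : ℝ) :
    ∃ K : NNReal, ∀ F : ℝ → ℝ,
      Monotone F →
      (∀ z < (0 : ℝ), F z = 0) →
      (∀ z, F z ≤ 1) →
      (∀ z ≥ (0 : ℝ), z ^ 3 * (1 - F z) ≤ C) →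
      LipschitzOnWith K (fun p : ℝ × ℝ => Afun F (-p.1 / p.2))
        (univ ×ˢ Ici (1 : ℝ)) := by
  refine ⟨C.toNNReal + (max C 1).toNNReal, fun F hF h0 h1 htail => ?_⟩
  have hF0 (z : ℝ) : 0 ≤ F z := h0 (min z (-1)) (by simp) ▸ hF (min_le_left z (-1))
  have hint := integrableOn_Ioi_mul_one_sub hF.measurable hF0 h1 htail
  exact LipschitzOnWith.uncurry (f := fun y z => Afun F (-y / z))
    (fun _ hz => (lipschitzWith_Afun_neg_div_const hint h1 htail hz).lipschitzOnWith)
    (fun y _ => lipschitzOnWith_Afun_neg_const_div hint hF0 h1 htail y)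

/-- `F̃(y, z) = A(-y/z)` is Lipschitz on `ℝ × [1, ∞)` with a Lipschitz constant
depending only on the tail bound `C`. -/
theorem Ftilde_lipschitz
    (C : ℝ) (hC : 0 < C) :
    ∃ K : NNReal, ∀ F : ℝ → ℝ,
      Monotone F →
      (∀ z < (0 : ℝ), F z = 0) →
      (∀ z, F z ≤ 1) →
      (∀ z ≥ (0 : ℝ), z ^ 3 * (1 - F z) ≤ C) →
      LipschitzOnWith K (fun p : ℝ × ℝ => Afun F (-p.1 / p.2))
        (univ ×ˢ Ici (1 : ℝ)) :=
  Ftilde_lipschitz_general C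
end

section
/- Define G(y,z) = B(-y/z) where B(w) = ∫_0^{1/w} (1-F(t)) dt for w > 0 and B(w) = ∫_0^∞ (1-F(t)) dt for w ≤ 0, with F the CDF of a nonnegative random variable satisfying t^3(1-F(t)) ≤ C on [0,∞) and finite first moment. Then G is Lipschitz continuous on (-∞,∞) × [1,∞). -/
open MeasureTheory Set Filter Topology

/-- The function `B` from the paper: `B(w) = ∫_0^{1/w} (1 - F t) dt` for `w > 0`
and `B(w) = ∫_0^∞ (1 - F t) dt` for `w ≤ 0`. -/
noncomputable def Bfun (F : ℝ → ℝ) : ℝ → ℝ := fun w =>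
  if 0 < w then ∫ t in Ioo (0 : ℝ) w⁻¹, (1 - F t)
  else ∫ t in Ioi (0 : ℝ), (1 - F t)

/-!
Since `0 ≤ 1 - F t ≤ 1` and `t ^ 3 * (1 - F t) ≤ C`, the tail satisfies
`1 - F t ≤ (C + 1) / t ^ k` for `k ≤ 3`. For `w > 0`, `Bfun F w` is the full integral minus
the integral over `Ioi w⁻¹`, so the `t⁻²` bound makes `Bfun F` globally Lipschitz; as
`z ≥ 1`, this settles the `y`-direction. In the `z`-direction, with `c = -y > 0`, the increment
is the integral of `1 - F` over `[z₁ / c, z₂ / c]`, and the scale-invariant `t⁻¹` bound controls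
it by `(C + 1) log (z₂ / z₁) ≤ (C + 1) (z₂ - z₁)`, uniformly in `c`. Lipschitz bounds in each
variable separately add up to a joint one.
-/

theorem lipschitzOnWith_prod_of_separately {α β γ : Type*} [PseudoMetricSpace α]
    [PseudoMetricSpace β] [PseudoMetricSpace γ] {f : α × β → γ} {s : Set α} {t : Set β}
    {K₁ K₂ : NNReal} (hleft : ∀ b ∈ t, LipschitzOnWith K₁ (fun a => f (a, b)) s)
    (hright : ∀ a ∈ s, LipschitzOnWith K₂ (fun b => f (a, b)) t) :
    LipschitzOnWith (K₁ + K₂) f (s ×ˢ t) := by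
  refine LipschitzOnWith.of_dist_le_mul ?_
  rintro ⟨a₁, b₁⟩ ⟨ha₁, hb₁⟩ ⟨a₂, b₂⟩ ⟨ha₂, hb₂⟩
  calc dist (f (a₁, b₁)) (f (a₂, b₂))
      ≤ dist (f (a₁, b₁)) (f (a₁, b₂)) + dist (f (a₁, b₂)) (f (a₂, b₂)) := dist_triangle _ _ _
    _ ≤ K₂ * dist b₁ b₂ + K₁ * dist a₁ a₂ :=
        add_le_add ((hright a₁ ha₁).dist_le_mul b₁ hb₁ b₂ hb₂)
          ((hleft b₂ hb₂).dist_le_mul a₁ ha₁ a₂ ha₂)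
    _ ≤ (K₁ + K₂) * dist (a₁, b₁) (a₂, b₂) := by
        rw [Prod.dist_eq, add_mul, add_comm]
        gcongr
        exacts [le_max_left _ _, le_max_right _ _]

theorem LipschitzOnWith.of_abs_sub_le_mul_of_le {f : ℝ → ℝ} {s : Set ℝ} {K : ℝ}
    (h : ∀ x ∈ s, ∀ y ∈ s, x ≤ y → |f x - f y| ≤ K * (y - x)) :
    LipschitzOnWith K.toNNReal f s := by
  refine LipschitzOnWith.of_dist_le' fun x hx y hy => ?_
  rw [Real.dist_eq, Real.dist_eq]
  rcases le_total x y with hxy | hyx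
  · rw [abs_of_nonpos (sub_nonpos.2 hxy), neg_sub]
    exact h x hx y hy hxy
  · rw [abs_of_nonneg (sub_nonneg.2 hyx), abs_sub_comm]
    exact h y hy x hx hyx

section DecayBounds

variable {f : ℝ → ℝ} {M a b : ℝ}

theorem abs_intervalIntegral_le_mul_log (hf : ∀ t > 0, |f t| ≤ M * t⁻¹) (ha : 0 < a)
    (hab : a ≤ b) : |∫ t in a..b, f t| ≤ M * Real.log (b / a) := by
  have hinv : IntervalIntegrable (fun t : ℝ => M * t⁻¹) volume a b := by
    refine ContinuousOn.intervalIntegrable (continuousOn_const.mul (continuousOn_inv₀.mono ?_))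
    rw [uIcc_of_le hab]
    exact fun t ht => (ha.trans_le ht.1).ne'
  rw [← Real.norm_eq_abs]
  calc ‖∫ t in a..b, f t‖ ≤ ∫ t in a..b, M * t⁻¹ :=
        intervalIntegral.norm_integral_le_of_norm_le hab
          (ae_of_all _ fun t ht => hf t (ha.trans ht.1)) hinv
    _ = M * Real.log (b / a) := by
        rw [intervalIntegral.integral_const_mul, integral_inv_of_pos ha (ha.trans_le hab)]

theorem abs_intervalIntegral_le_mul_inv_sub_inv (hf : ∀ t > 0, |f t| ≤ M * (t ^ 2)⁻¹)
    (ha : 0 < a) (hab : a ≤ b) : |∫ t in a..b, f t| ≤ M * (a⁻¹ - b⁻¹) := by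
  have hinv : IntervalIntegrable (fun t : ℝ => M * (t ^ 2)⁻¹) volume a b := by
    refine ContinuousOn.intervalIntegrable (continuousOn_const.mul ((continuous_pow 2).continuousOn.inv₀ ?_))
    rw [uIcc_of_le hab]
    exact fun t ht => pow_ne_zero 2 (ha.trans_le ht.1).ne'
  rw [← Real.norm_eq_abs]
  calc ‖∫ t in a..b, f t‖ ≤ ∫ t in a..b, M * (t ^ 2)⁻¹ :=
        intervalIntegral.norm_integral_le_of_norm_le hab
          (ae_of_all _ fun t ht => hf t (ha.trans ht.1)) hinv
    _ = M * (a⁻¹ - b⁻¹) := by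
        rw [intervalIntegral.integral_const_mul]
        congr 1
        have h0 : (0 : ℝ) ∉ uIcc a b := by
          rw [uIcc_of_le hab]
          exact fun h => ha.not_ge h.1
        have := integral_zpow (n := -2) (Or.inr ⟨by norm_num, h0⟩)
        norm_num at this
        rw [this]
        ring

theorem abs_integral_Ioi_le_mul_inv (hf : ∀ t > 0, |f t| ≤ M * (t ^ 2)⁻¹)
    (hint : IntegrableOn f (Ioi a)) (ha : 0 < a) : |∫ t in Ioi a, f t| ≤ M * a⁻¹ := by
  have hM : 0 ≤ M := by simpa using (abs_nonneg _).trans (hf 1 one_pos)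
  refine le_of_tendsto (intervalIntegral_tendsto_integral_Ioi a hint tendsto_id).abs ?_
  filter_upwards [eventually_ge_atTop a] with b hab
  calc |∫ t in a..b, f t| ≤ M * (a⁻¹ - b⁻¹) := abs_intervalIntegral_le_mul_inv_sub_inv hf ha hab
    _ ≤ M * a⁻¹ := by gcongr; exact sub_le_self _ (inv_nonneg.2 (ha.trans_le hab).le)

end DecayBounds

section Bfun

variable {F : ℝ → ℝ} {M x y : ℝ}

theorem Bfun_of_nonpos (hx : x ≤ 0) : Bfun F x = ∫ t in Ioi 0, (1 - F t) := by
  rw [Bfun, if_neg hx.not_gt]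

theorem Bfun_of_pos (hint : IntegrableOn (fun t => 1 - F t) (Ioi 0)) (hx : 0 < x) :
    Bfun F x = (∫ t in Ioi 0, (1 - F t)) - ∫ t in Ioi x⁻¹, (1 - F t) := by
  rw [Bfun, if_pos hx, intervalIntegral.integral_Ioi_sub_Ioi hint (inv_pos.2 hx).le,
    intervalIntegral.integral_of_le (inv_pos.2 hx).le, integral_Ioc_eq_integral_Ioo]

theorem Bfun_sub_Bfun_of_pos (hint : IntegrableOn (fun t => 1 - F t) (Ioi 0)) (hx : 0 < x)
    (hxy : x ≤ y) : Bfun F x - Bfun F y = ∫ t in y⁻¹..x⁻¹, (1 - F t) := by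
  have hy : 0 < y := hx.trans_le hxy
  rw [Bfun_of_pos hint hx, Bfun_of_pos hint hy, sub_sub_sub_cancel_left,
    intervalIntegral.integral_Ioi_sub_Ioi (hint.mono_set (Ioi_subset_Ioi (inv_pos.2 hy).le))
      (inv_anti₀ hx hxy)]

theorem lipschitzWith_Bfun (hint : IntegrableOn (fun t => 1 - F t) (Ioi 0))
    (hdecay : ∀ t > 0, |1 - F t| ≤ M * (t ^ 2)⁻¹) : LipschitzWith M.toNNReal (Bfun F) := by
  have hM : 0 ≤ M := by simpa using (abs_nonneg _).trans (hdecay 1 one_pos)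
  rw [← lipschitzOnWith_univ]
  refine LipschitzOnWith.of_abs_sub_le_mul_of_le fun x _ y _ hxy => ?_
  rcases le_or_gt y 0 with hy | hy
  · rw [Bfun_of_nonpos (hxy.trans hy), Bfun_of_nonpos hy, sub_self, abs_zero]
    exact mul_nonneg hM (sub_nonneg.2 hxy)
  rcases le_or_gt x 0 with hx | hx
  · rw [Bfun_of_nonpos hx, Bfun_of_pos hint hy, sub_sub_cancel]
    calc |∫ t in Ioi y⁻¹, (1 - F t)| ≤ M * y⁻¹⁻¹ :=
          abs_integral_Ioi_le_mul_inv hdecay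
            (hint.mono_set (Ioi_subset_Ioi (inv_pos.2 hy).le)) (inv_pos.2 hy)
      _ ≤ M * (y - x) := by rw [inv_inv]; gcongr; linarith
  · rw [Bfun_sub_Bfun_of_pos hint hx hxy]
    calc |∫ t in y⁻¹..x⁻¹, (1 - F t)| ≤ M * (y⁻¹⁻¹ - x⁻¹⁻¹) :=
          abs_intervalIntegral_le_mul_inv_sub_inv hdecay (inv_pos.2 hy) (inv_anti₀ hx hxy)
      _ = M * (y - x) := by rw [inv_inv, inv_inv]

theorem lipschitzOnWith_Bfun_neg_div (hint : IntegrableOn (fun t => 1 - F t) (Ioi 0))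
    (hdecay : ∀ t > 0, |1 - F t| ≤ M * t⁻¹) (y : ℝ) :
    LipschitzOnWith M.toNNReal (fun z => Bfun F (-y / z)) (Ici 1) := by
  have hM : 0 ≤ M := by simpa using (abs_nonneg _).trans (hdecay 1 one_pos)
  refine LipschitzOnWith.of_abs_sub_le_mul_of_le fun z₁ hz₁ z₂ _ hz => ?_
  have hz₁0 : 0 < z₁ := zero_lt_one.trans_le hz₁
  have hz₂0 : 0 < z₂ := hz₁0.trans_le hz
  rcases le_or_gt 0 y with hy | hy
  · have hw : ∀ z, 0 < z → -y / z ≤ 0 := fun z hz =>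
      div_nonpos_of_nonpos_of_nonneg (neg_nonpos.2 hy) hz.le
    rw [Bfun_of_nonpos (hw z₁ hz₁0), Bfun_of_nonpos (hw z₂ hz₂0), sub_self, abs_zero]
    exact mul_nonneg hM (sub_nonneg.2 hz)
  have hc : 0 < -y := neg_pos.2 hy
  rw [abs_sub_comm, Bfun_sub_Bfun_of_pos hint (div_pos hc hz₂0)
    (div_le_div_of_nonneg_left hc.le hz₁0 hz), inv_div, inv_div]
  calc |∫ t in z₁ / -y..z₂ / -y, (1 - F t)| ≤ M * Real.log (z₂ / -y / (z₁ / -y)) :=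
        abs_intervalIntegral_le_mul_log hdecay (div_pos hz₁0 hc)
          (div_le_div_of_nonneg_right hz hc.le)
    _ = M * Real.log (z₂ / z₁) := by rw [div_div_div_cancel_right₀ hc.ne']
    _ ≤ M * (z₂ - z₁) := by
        gcongr
        calc Real.log (z₂ / z₁) ≤ z₂ / z₁ - 1 := Real.log_le_sub_one_of_pos (div_pos hz₂0 hz₁0)
          _ = (z₂ - z₁) / z₁ := by field_simp
          _ ≤ z₂ - z₁ := div_le_self (sub_nonneg.2 hz) hz₁

end Bfun

theorem abs_one_sub_le_mul_inv_pow {C : ℝ} {F : ℝ → ℝ} (hC : 0 < C) (hmono : Monotone F)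
    (hneg : ∀ z < (0 : ℝ), F z = 0) (hle : ∀ z, F z ≤ 1)
    (hbd : ∀ z ≥ (0 : ℝ), z ^ 3 * (1 - F z) ≤ C) {k : ℕ} (hk : k ≤ 3) {t : ℝ} (ht : 0 < t) :
    |1 - F t| ≤ (C + 1) * (t ^ k)⁻¹ := by
  have hF : 0 ≤ F t := (hneg (-1) (by norm_num)).symm.le.trans (hmono (by linarith))
  have hg : 0 ≤ 1 - F t := sub_nonneg.2 (hle t)
  rw [abs_of_nonneg hg, ← div_eq_mul_inv, le_div_iff₀ (by positivity)]
  rcases le_total t 1 with ht1 | ht1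
  · calc (1 - F t) * t ^ k ≤ 1 * 1 :=
          mul_le_mul (by linarith) (pow_le_one₀ ht.le ht1) (by positivity) zero_le_one
      _ ≤ C + 1 := by linarith
  · calc (1 - F t) * t ^ k ≤ (1 - F t) * t ^ 3 := by gcongr
      _ ≤ C + 1 := by linarith [hbd t ht.le]

/-- `G(y, z) = B(-y/z)` is Lipschitz continuous on `ℝ × [1, ∞)`. -/
theorem G_lipschitz
    (C : ℝ) (hC : 0 < C)
    (F : ℝ → ℝ)
    (hmono : Monotone F)
    (hneg : ∀ z < (0 : ℝ), F z = 0)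
    (hle : ∀ z, F z ≤ 1)
    (hbd : ∀ z ≥ (0 : ℝ), z ^ 3 * (1 - F z) ≤ C)
    (hint : IntegrableOn (fun t => 1 - F t) (Ioi (0 : ℝ))) :
    ∃ K : NNReal,
      LipschitzOnWith K (fun p : ℝ × ℝ => Bfun F (-p.1 / p.2))
        (univ ×ˢ Ici (1 : ℝ)) := by
  have hdecay : ∀ k ≤ 3, ∀ t > 0, |1 - F t| ≤ (C + 1) * (t ^ k)⁻¹ :=
    fun k hk t ht => abs_one_sub_le_mul_inv_pow hC hmono hneg hle hbd hk ht
  refine ⟨(C + 1).toNNReal + (C + 1).toNNReal,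
    lipschitzOnWith_prod_of_separately (fun z hz => ?_) fun y _ => ?_⟩
  · have hdiv : LipschitzWith 1 fun y : ℝ => -y / z := LipschitzWith.mk_one fun y₁ y₂ => by
      rw [Real.dist_eq, Real.dist_eq, ← sub_div, abs_div, neg_sub_neg, abs_sub_comm]
      exact div_le_self (abs_nonneg _) ((le_abs_self z).trans' hz)
    have hB := (lipschitzWith_Bfun hint (hdecay 2 (by norm_num))).comp hdiv
    rw [mul_one] at hB
    exact hB.lipschitzOnWith
  · exact lipschitzOnWith_Bfun_neg_div hint (by simpa using hdecay 1 (by norm_num)) y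
end
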